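/- arXiv:1606.08220 — 5 statements merged into one kernel-verified Lean document; each statement's English description precedes it below -/
import Mathlib

section
/- Let Q = diag(q_1,…,q_n) with q_i > 0, let B ∈ ℝ^{n×m} with Bᵀ𝟙 = 0, let L_c ∈ ℝ^{n×n} with L_c𝟙 = 0, let γ_c, γ_e, γ_p, γ_l > 0, d, r, x̄_0, x̄_s ∈ ℝ^n and x̄(t) := x̄_0 + x̄_s t. Suppose x, x_p : [0,∞) → ℝ^n and x_e : [0,∞) → ℝ^m are differentiable and satisfy for all t ≥ 0: ẋ = −γ_c B Bᵀ(x − x̄(t)) − γ_e B x_e + Q^{-1}(γ_p x_p − r) + d, ẋ_p = −γ_l L_c x_p − γ_p Q^{-1}(x − x̄(t)), ẋ_e = γ_e Bᵀ(x − x̄(t)). Let x̄_p := −(1/γ_p)(𝟙𝟙ᵀ/(𝟙ᵀQ^{-1}𝟙)) d̃ with d̃ := d − x̄_s − Q^{-1}r, and let x̄_e ∈ ℝ^m be any vector with γ_e B x̄_e = (I − Q^{-1}𝟙𝟙ᵀ/(𝟙ᵀQ^{-1}𝟙)) d̃. Then the incremental states x̃ := x − x̄, x̃_p := x_p − x̄_p,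 x̃_e := x_e − x̄_e satisfy for all t ≥ 0: x̃' = −γ_c B Bᵀ x̃ − γ_e B x̃_e + γ_p Q^{-1} x̃_p, x̃_p' = −γ_l L_c x̃_p − γ_p Q^{-1} x̃, x̃_e' = γ_e Bᵀ x̃. -/
open Matrix Filter

/-- Euclidean norm on `Fin k → ℝ`. -/
noncomputable def euclNorm {k : ℕ} (v : Fin k → ℝ) : ℝ :=
  ‖(WithLp.equiv 2 (Fin k → ℝ)).symm v‖

/-- Operator norm on matrices induced by the Euclidean norms. -/
noncomputable def matOpNorm {k l : ℕ} (A : Matrix (Fin k) (Fin l) ℝ) : ℝ :=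
  ‖LinearMap.toContinuousLinearMap (Matrix.toEuclideanLin A)‖

/-- The all-ones vector `𝟙`. -/
def onesVec (k : ℕ) : Fin k → ℝ := fun _ => 1

/-- The all-ones matrix `𝟙𝟙ᵀ`. -/
def onesMat (k : ℕ) : Matrix (Fin k) (Fin k) ℝ := Matrix.of fun _ _ => 1

/-- Scalar saturation: `sat(y; l, u) = l` if `y ≤ l`, `u` if `u ≤ y`, and `y` otherwise. -/
noncomputable def sat1 (y l u : ℝ) : ℝ := if y ≤ l then l else if u ≤ y then u else y

/-- Componentwise (multidimensional) saturation function. -/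
noncomputable def satv {k : ℕ} (x xm xp : Fin k → ℝ) : Fin k → ℝ :=
  fun i => sat1 (x i) (xm i) (xp i)

/-!
Shifting the states by the affine reference `x̄(t)` and by the equilibrium `(x̄_p, x̄_e)` cancels
every constant input of the closed loop: the choice of `x̄_p` and `x̄_e` makes
`γ_e B x̄_e − γ_p Q⁻¹ x̄_p` equal to `d̃ = d − x̄_s − Q⁻¹ r`, which absorbs the drift `x̄' = x̄_s`
together with the constant terms `d − Q⁻¹ r`, while `x̄_p ∈ span 𝟙 ⊆ ker L_c`.
-/

lemma onesMat_mulVec {k : ℕ} (v : Fin k → ℝ) :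
    onesMat k *ᵥ v = (∑ j, v j) • onesVec k := by
  funext i
  simp [onesMat, onesVec, mulVec, dotProduct]

lemma mulVec_onesMat_mulVec_of_mulVec_ones_eq_zero {k l : ℕ} {A : Matrix (Fin l) (Fin k) ℝ}
    (hA : A *ᵥ onesVec k = 0) (v : Fin k → ℝ) : A *ᵥ (onesMat k *ᵥ v) = 0 := by
  rw [onesMat_mulVec, mulVec_smul, hA, smul_zero]

lemma hasDerivAt_const_add_smul {E : Type*} [NormedAddCommGroup E] [NormedSpace ℝ E]
    (a b : E) (t : ℝ) : HasDerivAt (fun s : ℝ => a + s • b) b t := by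
  simpa using ((hasDerivAt_id t).smul_const b).const_add a

lemma smul_mulVec_sub_smul_mulVec_eq_of_equilibrium {k l : ℕ}
    {B : Matrix (Fin k) (Fin l) ℝ} {M P : Matrix (Fin k) (Fin k) ℝ} {γe γp c : ℝ}
    {v xp : Fin k → ℝ} {xe : Fin l → ℝ} (hγp : γp ≠ 0)
    (hxp : xp = -((γp⁻¹ * c) • (P *ᵥ v))) (hxe : γe • (B *ᵥ xe) = (1 - c • (M * P)) *ᵥ v) :
    γe • (B *ᵥ xe) - γp • (M *ᵥ xp) = v := by
  rw [hxe, hxp, sub_mulVec, one_mulVec, smul_mulVec, ← mulVec_mulVec, mulVec_neg, mulVec_smul,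
    smul_neg, smul_smul, ← mul_assoc, mul_inv_cancel₀ hγp, one_mul]
  abel

theorem incremental_dynamics_unconstrained_general {n m : ℕ}
    (B : Matrix (Fin n) (Fin m) ℝ)
    (Lc : Matrix (Fin n) (Fin n) ℝ) (hLc1 : Lc *ᵥ onesVec n = 0)
    (γc γe γp γl : ℝ) (hγp : 0 < γp)
    (d r xbar0 xbars : Fin n → ℝ)
    (xbar : ℝ → Fin n → ℝ) (hxbar : ∀ t, xbar t = xbar0 + t • xbars)
    (Qinv : Matrix (Fin n) (Fin n) ℝ)
    (x xp : ℝ → Fin n → ℝ) (xe : ℝ → Fin m → ℝ)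
    (hx : ∀ t ≥ (0:ℝ), HasDerivAt x
      (-(γc • ((B * Bᵀ) *ᵥ (x t - xbar t))) - γe • (B *ᵥ xe t)
        + Qinv *ᵥ (γp • xp t - r) + d) t)
    (hxp : ∀ t ≥ (0:ℝ), HasDerivAt xp
      (-(γl • (Lc *ᵥ xp t)) - γp • (Qinv *ᵥ (x t - xbar t))) t)
    (hxe : ∀ t ≥ (0:ℝ), HasDerivAt xe (γe • (Bᵀ *ᵥ (x t - xbar t))) t)
    (dtil : Fin n → ℝ) (hdtil : dtil = d - xbars - Qinv *ᵥ r)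
    (xbarp : Fin n → ℝ)
    (hxbarp : xbarp =
      -((γp⁻¹ * (onesVec n ⬝ᵥ (Qinv *ᵥ onesVec n))⁻¹) • (onesMat n *ᵥ dtil)))
    (xbare : Fin m → ℝ)
    (hxbare : γe • (B *ᵥ xbare) =
      (1 - (onesVec n ⬝ᵥ (Qinv *ᵥ onesVec n))⁻¹ • (Qinv * onesMat n)) *ᵥ dtil) :
    (∀ t ≥ (0:ℝ), HasDerivAt (fun s => x s - xbar s)
        (-(γc • ((B * Bᵀ) *ᵥ (x t - xbar t))) - γe • (B *ᵥ (xe t - xbare))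
          + γp • (Qinv *ᵥ (xp t - xbarp))) t) ∧
    (∀ t ≥ (0:ℝ), HasDerivAt (fun s => xp s - xbarp)
        (-(γl • (Lc *ᵥ (xp t - xbarp))) - γp • (Qinv *ᵥ (x t - xbar t))) t) ∧
    (∀ t ≥ (0:ℝ), HasDerivAt (fun s => xe s - xbare)
        (γe • (Bᵀ *ᵥ (x t - xbar t))) t) := by
  have hbal : γe • (B *ᵥ xbare) - γp • (Qinv *ᵥ xbarp) = d - xbars - Qinv *ᵥ r :=
    hdtil ▸ smul_mulVec_sub_smul_mulVec_eq_of_equilibrium hγp.ne' hxbarp hxbare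
  have hLc : Lc *ᵥ xbarp = 0 := by
    rw [hxbarp, mulVec_neg, mulVec_smul, mulVec_onesMat_mulVec_of_mulVec_ones_eq_zero hLc1,
      smul_zero, neg_zero]
  have hxbar' : ∀ t, HasDerivAt xbar xbars t := fun t =>
    funext hxbar ▸ hasDerivAt_const_add_smul xbar0 xbars t
  refine ⟨fun t ht => ?_, fun t ht => ?_, fun t ht => (hxe t ht).sub_const xbare⟩
  · refine ((hx t ht).sub (hxbar' t)).congr_deriv ?_
    simp only [mulVec_sub, mulVec_smul]
    linear_combination (norm := module) -hbal
  · refine ((hxp t ht).sub_const xbarp).congr_deriv ?_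
    rw [mulVec_sub (A := Lc), hLc, sub_zero]

/-- the incremental states of the unconstrained closed loop satisfy
the shifted (incremental) dynamics. -/
theorem incremental_dynamics_unconstrained {n m : ℕ}
    (q : Fin n → ℝ) (hq : ∀ i, 0 < q i)
    (B : Matrix (Fin n) (Fin m) ℝ) (hB1 : Bᵀ *ᵥ onesVec n = 0)
    (Lc : Matrix (Fin n) (Fin n) ℝ) (hLc1 : Lc *ᵥ onesVec n = 0)
    (γc γe γp γl : ℝ) (hγc : 0 < γc) (hγe : 0 < γe) (hγp : 0 < γp) (hγl : 0 < γl)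
    (d r xbar0 xbars : Fin n → ℝ)
    (xbar : ℝ → Fin n → ℝ) (hxbar : ∀ t, xbar t = xbar0 + t • xbars)
    (Qinv : Matrix (Fin n) (Fin n) ℝ)
    (hQinv : Qinv = Matrix.diagonal fun i => (q i)⁻¹)
    (x xp : ℝ → Fin n → ℝ) (xe : ℝ → Fin m → ℝ)
    (hx : ∀ t ≥ (0:ℝ), HasDerivAt x
      (-(γc • ((B * Bᵀ) *ᵥ (x t - xbar t))) - γe • (B *ᵥ xe t)
        + Qinv *ᵥ (γp • xp t - r) + d) t)
    (hxp : ∀ t ≥ (0:ℝ), HasDerivAt xp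
      (-(γl • (Lc *ᵥ xp t)) - γp • (Qinv *ᵥ (x t - xbar t))) t)
    (hxe : ∀ t ≥ (0:ℝ), HasDerivAt xe (γe • (Bᵀ *ᵥ (x t - xbar t))) t)
    (dtil : Fin n → ℝ) (hdtil : dtil = d - xbars - Qinv *ᵥ r)
    (xbarp : Fin n → ℝ)
    (hxbarp : xbarp =
      -((γp⁻¹ * (onesVec n ⬝ᵥ (Qinv *ᵥ onesVec n))⁻¹) • (onesMat n *ᵥ dtil)))
    (xbare : Fin m → ℝ)
    (hxbare : γe • (B *ᵥ xbare) =
      (1 - (onesVec n ⬝ᵥ (Qinv *ᵥ onesVec n))⁻¹ • (Qinv * onesMat n)) *ᵥ dtil) :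
    (∀ t ≥ (0:ℝ), HasDerivAt (fun s => x s - xbar s)
        (-(γc • ((B * Bᵀ) *ᵥ (x t - xbar t))) - γe • (B *ᵥ (xe t - xbare))
          + γp • (Qinv *ᵥ (xp t - xbarp))) t) ∧
    (∀ t ≥ (0:ℝ), HasDerivAt (fun s => xp s - xbarp)
        (-(γl • (Lc *ᵥ (xp t - xbarp))) - γp • (Qinv *ᵥ (x t - xbar t))) t) ∧
    (∀ t ≥ (0:ℝ), HasDerivAt (fun s => xe s - xbare)
        (γe • (Bᵀ *ᵥ (x t - xbar t))) t) :=
  incremental_dynamics_unconstrained_general B Lc hLc1 γc γe γp γl hγp d r xbar0 xbars xbar hxbar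
    Qinv x xp xe hx hxp hxe dtil hdtil xbarp hxbarp xbare hxbare
end

section
/- (Lemma A.1.) Let n ≥ 2, let Q = diag(q_1,…,q_n) with q_i > 0, and let L_c ∈ ℝ^{n×n} be the Laplacian of a connected undirected graph, i.e. L_c is symmetric, (L_c)_{ij} ≤ 0 for all i ≠ j, L_c𝟙 = 0, and ker(L_c) = span{𝟙}. Define Q̄ := Q^{-1}𝟙𝟙ᵀQ^{-1}/(𝟙ᵀQ^{-1}𝟙) − Q^{-1}, and for γ ≥ 0 let Q̃ ∈ ℝ^{(n+1)×n} be the matrix obtained by stacking γQ̄ − L_cQ on top of the row 𝟙ᵀ. Then for every γ ≥ 0 the matrices γQ̄ − L_cQ + 𝟙𝟙ᵀ, γQ̄ − L_cQ + (1/n)𝟙𝟙ᵀ, and Q̃ᵀQ̃ are all invertible. In particular (γ = 0) the matrix Φ := −L_cQ + (1/n)𝟙𝟙ᵀ is invertible. -/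
/-!
Write `M = γQ̄ − L_c Q`. Since `𝟙ᵀQ̄ = 0` and `𝟙ᵀL_c = 0`, also `𝟙ᵀM = 0`, and all three
matrices are invertible once `Mx = 0` and `𝟙ᵀx = 0` force `x = 0`: apply `𝟙ᵀ` to
`(M + c𝟙𝟙ᵀ)x = 0`, and note that `Q̃ᵀQ̃` is the Gram matrix of `x ↦ (Mx, 𝟙ᵀx)`.
For such an `x` put `y = Qx`. Then `yᵀQ̄x = −‖x‖²`, so `0 = yᵀMx = −γ‖x‖² − yᵀL_c y`.
As `2 vᵀL_c v = ∑ −(L_c)ᵢⱼ (vᵢ − vⱼ)²`, `L_c` is positive semidefinite, so `L_c y = 0`.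
Connectivity gives `y = c𝟙`, i.e. `x = cQ⁻¹𝟙`, and `0 = 𝟙ᵀx = c 𝟙ᵀQ⁻¹𝟙` gives `c = 0`.
-/

open Matrix Filter

namespace Matrix

variable {ι : Type*} [Fintype ι]

section Laplacian

variable {L : Matrix ι ι ℝ}

lemma two_mul_dotProduct_mulVec_eq_sum_sq (hsymm : L.IsSymm) (h1 : L *ᵥ 1 = 0) (v : ι → ℝ) :
    2 * (v ⬝ᵥ (L *ᵥ v)) = ∑ i, ∑ j, -L i j * (v i - v j) ^ 2 := by
  have hrow : ∀ i, ∑ j, L i j = 0 := fun i => by simpa [mulVec, dotProduct] using congrFun h1 i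
  have hcol : ∀ j, ∑ i, L i j = 0 := fun j => by simpa [hsymm.apply] using hrow j
  have hdiag : ∑ i, ∑ j, -L i j * (v i ^ 2 + v j ^ 2) = 0 := by
    simp only [mul_add, Finset.sum_add_distrib, neg_mul]
    rw [Finset.sum_comm (f := fun i j => -(L i j * v j ^ 2))]
    simp [← Finset.sum_mul, hrow, hcol]
  rw [← sub_zero (∑ i, _), ← hdiag, ← Finset.sum_sub_distrib]
  simp only [← Finset.sum_sub_distrib, dotProduct, mulVec, Finset.mul_sum]
  refine Finset.sum_congr rfl fun i _ => Finset.sum_congr rfl fun j _ => by ring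

theorem posSemidef_of_offDiag_nonpos (hsymm : L.IsSymm) (hoff : ∀ i j, i ≠ j → L i j ≤ 0)
    (h1 : L *ᵥ 1 = 0) : L.PosSemidef := by
  refine .of_dotProduct_mulVec_nonneg (isHermitian_iff_isSymm.mpr hsymm) fun v => ?_
  have hsum : 0 ≤ ∑ i, ∑ j, -L i j * (v i - v j) ^ 2 := by
    refine Finset.sum_nonneg fun i _ => Finset.sum_nonneg fun j _ => ?_
    obtain rfl | hij := eq_or_ne i j
    · simp
    · exact mul_nonneg (neg_nonneg.mpr (hoff i j hij)) (sq_nonneg _)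
  rw [star_trivial]
  linarith [two_mul_dotProduct_mulVec_eq_sum_sq hsymm h1 v]

end Laplacian

end Matrix

open Matrix

section QBar

variable {ι : Type*} [Fintype ι]

lemma one_dotProduct_inv_pos [Nonempty ι] {q : ι → ℝ} (hq : ∀ i, 0 < q i) : 0 < 1 ⬝ᵥ q⁻¹ := by
  simpa [dotProduct] using Finset.sum_pos (fun i _ => inv_pos.mpr (hq i)) Finset.univ_nonempty

variable [DecidableEq ι] (q : ι → ℝ)

/-- The paper's `Q̄ = Q⁻¹𝟙𝟙ᵀQ⁻¹ / (𝟙ᵀQ⁻¹𝟙) − Q⁻¹` for `Q = diag q`. -/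
noncomputable def qBar : Matrix ι ι ℝ := (1 ⬝ᵥ q⁻¹)⁻¹ • vecMulVec q⁻¹ q⁻¹ - diagonal q⁻¹

variable {q}

lemma qBar_eq_onesMat {n : ℕ} (q : Fin n → ℝ) :
    qBar q = (onesVec n ⬝ᵥ ((diagonal fun i => (q i)⁻¹) *ᵥ onesVec n))⁻¹ •
      ((diagonal fun i => (q i)⁻¹) * onesMat n * diagonal fun i => (q i)⁻¹) -
        diagonal fun i => (q i)⁻¹ := by
  ext i j
  simp [qBar, onesMat, onesVec, dotProduct, mulVec_diagonal, vecMulVec_apply, diagonal_apply]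

lemma vecMul_one_qBar (hs : 1 ⬝ᵥ q⁻¹ ≠ 0) : 1 ᵥ* qBar q = 0 := by
  ext j
  simp [qBar, vecMul_sub, vecMul_smul, vecMul_vecMulVec, vecMul_diagonal, hs]

lemma qBar_mulVec (x : ι → ℝ) : qBar q *ᵥ x = ((1 ⬝ᵥ q⁻¹)⁻¹ * (q⁻¹ ⬝ᵥ x)) • q⁻¹ - q⁻¹ * x := by
  ext i
  simp [qBar, sub_mulVec, smul_mulVec, vecMulVec_mulVec, mulVec_diagonal, mul_comm, mul_assoc]

lemma dotProduct_qBar_mulVec (hq : ∀ i, q i ≠ 0) {x : ι → ℝ} (hx : 1 ⬝ᵥ x = 0) :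
    (q * x) ⬝ᵥ (qBar q *ᵥ x) = -(x ⬝ᵥ x) := by
  have hcancel : ∀ i, q i * x i * (q i)⁻¹ = x i := fun i => by field_simp [hq i]
  have h1 : (q * x) ⬝ᵥ q⁻¹ = 1 ⬝ᵥ x := by simp [dotProduct, hcancel]
  have h2 : (q * x) ⬝ᵥ (q⁻¹ * x) = x ⬝ᵥ x := by
    simp [dotProduct, ← mul_assoc, hcancel]
  rw [qBar_mulVec, dotProduct_sub, dotProduct_smul, h1, h2, hx]
  simp

variable {L : Matrix ι ι ℝ} {γ : ℝ}

lemma vecMul_one_smul_qBar_sub_mul_diagonal (hs : 1 ⬝ᵥ q⁻¹ ≠ 0) (hL : 1 ᵥ* L = 0) :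
    1 ᵥ* (γ • qBar q - L * diagonal q) = 0 := by
  rw [vecMul_sub, vecMul_smul, vecMul_one_qBar hs, ← vecMul_vecMul, hL, zero_vecMul, smul_zero,
    sub_zero]

theorem eq_zero_of_smul_qBar_sub_mul_diagonal_mulVec_eq_zero [Nonempty ι] (hq : ∀ i, 0 < q i)
    (hL : L.PosSemidef) (hker : LinearMap.ker L.mulVecLin = Submodule.span ℝ {1}) (hγ : 0 ≤ γ)
    {x : ι → ℝ} (hx : 1 ⬝ᵥ x = 0) (hMx : (γ • qBar q - L * diagonal q) *ᵥ x = 0) : x = 0 := by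
  have hq0 : ∀ i, q i ≠ 0 := fun i => (hq i).ne'
  have hdiag : diagonal q *ᵥ x = q * x := by ext i; simp [mulVec_diagonal]
  have hMx' : γ • (qBar q *ᵥ x) - L *ᵥ (q * x) = 0 := by
    rwa [sub_mulVec, smul_mulVec, ← mulVec_mulVec, hdiag] at hMx
  have hquad : (q * x) ⬝ᵥ (L *ᵥ (q * x)) = -γ * (x ⬝ᵥ x) := by
    have := congrArg ((q * x) ⬝ᵥ ·) hMx'
    simp only [dotProduct_sub, dotProduct_smul, dotProduct_qBar_mulVec hq0 hx, dotProduct_zero,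
      smul_eq_mul] at this
    linarith
  have hLy : L *ᵥ (q * x) = 0 := by
    refine (hL.dotProduct_mulVec_zero_iff (q * x)).mp
      (le_antisymm ?_ (hL.dotProduct_mulVec_nonneg (q * x)))
    rw [star_trivial, hquad]
    exact mul_nonpos_of_nonpos_of_nonneg (neg_nonpos.mpr hγ)
      (by simpa using dotProduct_self_star_nonneg x)
  obtain ⟨c, hc⟩ : ∃ c : ℝ, c • 1 = q * x := by
    rw [← Submodule.mem_span_singleton, ← hker]
    exact hLy
  have hxc : x = c • q⁻¹ := by
    ext i
    have hci : c = q i * x i := by simpa using congrFun hc i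
    rw [Pi.smul_apply, Pi.inv_apply, smul_eq_mul, hci]
    field_simp [hq0 i]
  have hs := one_dotProduct_inv_pos hq
  have : c = 0 := by
    rw [hxc, dotProduct_smul, smul_eq_mul] at hx
    exact (mul_eq_zero.mp hx).resolve_right hs.ne'
  rw [hxc, this, zero_smul]

end QBar

theorem isUnit_det_of_mulVec_eq_zero {n K : Type*} [Fintype n] [DecidableEq n] [Field K]
    {A : Matrix n n K} (h : ∀ v, A *ᵥ v = 0 → v = 0) : IsUnit A.det :=
  isUnit_iff_ne_zero.mpr fun hdet =>
    let ⟨v, hv0, hv⟩ := exists_mulVec_eq_zero_iff.mpr hdet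
    hv0 (h v hv)

theorem isUnit_det_add_smul_onesMat {n : ℕ} {M : Matrix (Fin n) (Fin n) ℝ} (hM : 1 ᵥ* M = 0)
    (hinj : ∀ x, 1 ⬝ᵥ x = 0 → M *ᵥ x = 0 → x = 0) {c : ℝ} (hc : c ≠ 0) :
    IsUnit (M + c • onesMat n).det := by
  refine isUnit_det_of_mulVec_eq_zero fun v hv => ?_
  obtain rfl | hn := Nat.eq_zero_or_pos n
  · exact Subsingleton.elim _ _
  have hJ : onesMat n *ᵥ v = (1 ⬝ᵥ v) • 1 := by ext; simp [onesMat, mulVec, dotProduct]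
  rw [add_mulVec, smul_mulVec, hJ] at hv
  have hsum : c * ((1 ⬝ᵥ v) * n) = 0 := by
    simpa [dotProduct_add, dotProduct_mulVec, hM] using congrArg (1 ⬝ᵥ ·) hv
  have h1 : 1 ⬝ᵥ v = 0 := by simpa [hc, hn.ne'] using hsum
  exact hinj v h1 (by simpa [h1] using hv)

theorem isUnit_det_transpose_mul_self {m n : Type*} [Fintype m] [Fintype n] [DecidableEq n]
    {F : Matrix m n ℝ} (hF : ∀ v, F *ᵥ v = 0 → v = 0) : IsUnit (Fᵀ * F).det := by
  have hpos := PosDef.conjTranspose_mul_self F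
    (LinearMap.ker_eq_bot.mp (ker_mulVecLin_eq_bot_iff.mpr hF))
  rw [conjTranspose_eq_transpose_of_trivial] at hpos
  exact (isUnit_iff_isUnit_det _).mp hpos.isUnit

theorem isUnit_det_transpose_mul_self_fromRows {m n : Type*} [Fintype m] [Fintype n]
    [DecidableEq n] {M : Matrix m n ℝ} (hinj : ∀ x, 1 ⬝ᵥ x = 0 → M *ᵥ x = 0 → x = 0) :
    IsUnit ((fromRows M (of fun (_ : Fin 1) (_ : n) => (1 : ℝ)))ᵀ *
      fromRows M (of fun (_ : Fin 1) (_ : n) => (1 : ℝ))).det := by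
  refine isUnit_det_transpose_mul_self fun v hv => ?_
  rw [fromRows_mulVec, ← Sum.elim_zero_zero, Sum.elim_eq_iff] at hv
  refine hinj v ?_ hv.1
  simpa [mulVec, dotProduct] using congrFun hv.2 0

/-- Lemma A.1: for every `γ ≥ 0` the matrices `γQ̄ − L_cQ + 𝟙𝟙ᵀ`,
`γQ̄ − L_cQ + (1/n)𝟙𝟙ᵀ` and `Q̃ᵀQ̃` are invertible; in particular `Φ` is invertible. -/
theorem lemmaA1_full_rank {n : ℕ} (hn : 2 ≤ n)
    (q : Fin n → ℝ) (hq : ∀ i, 0 < q i)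
    (Lc : Matrix (Fin n) (Fin n) ℝ) (hsymm : Lc.IsSymm)
    (hoff : ∀ i j, i ≠ j → Lc i j ≤ 0)
    (hLc1 : Lc *ᵥ onesVec n = 0)
    (hker : LinearMap.ker Lc.mulVecLin = Submodule.span ℝ {onesVec n})
    (Q Qinv Qbar Φ : Matrix (Fin n) (Fin n) ℝ)
    (hQ : Q = Matrix.diagonal q)
    (hQinv : Qinv = Matrix.diagonal fun i => (q i)⁻¹)
    (hQbar : Qbar =
      (onesVec n ⬝ᵥ (Qinv *ᵥ onesVec n))⁻¹ • (Qinv * onesMat n * Qinv) - Qinv)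
    (hΦ : Φ = -(Lc * Q) + (n : ℝ)⁻¹ • onesMat n) :
    (∀ γ : ℝ, 0 ≤ γ →
      IsUnit (γ • Qbar - Lc * Q + onesMat n).det ∧
      IsUnit (γ • Qbar - Lc * Q + (n : ℝ)⁻¹ • onesMat n).det ∧
      IsUnit ((Matrix.fromRows (γ • Qbar - Lc * Q)
          (Matrix.of fun (_ : Fin 1) (_ : Fin n) => (1:ℝ)))ᵀ *
        Matrix.fromRows (γ • Qbar - Lc * Q)
          (Matrix.of fun (_ : Fin 1) (_ : Fin n) => (1:ℝ))).det) ∧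
    IsUnit Φ.det := by
  subst hQ hQinv hQbar hΦ
  have : Nonempty (Fin n) := ⟨⟨0, by omega⟩⟩
  rw [← qBar_eq_onesMat]
  have hLc : 1 ᵥ* Lc = 0 := by rw [← hsymm.eq, vecMul_transpose]; exact hLc1
  have hcol (γ : ℝ) : 1 ᵥ* (γ • qBar q - Lc * diagonal q) = 0 :=
    vecMul_one_smul_qBar_sub_mul_diagonal (one_dotProduct_inv_pos hq).ne' hLc
  have hinj (γ : ℝ) (hγ : 0 ≤ γ) (x : Fin n → ℝ) :
      1 ⬝ᵥ x = 0 → (γ • qBar q - Lc * diagonal q) *ᵥ x = 0 → x = 0 :=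
    eq_zero_of_smul_qBar_sub_mul_diagonal_mulVec_eq_zero hq
      (posSemidef_of_offDiag_nonpos hsymm hoff hLc1) hker hγ
  refine ⟨fun γ hγ => ⟨?_, ?_, ?_⟩, ?_⟩
  · simpa using isUnit_det_add_smul_onesMat (hcol γ) (hinj γ hγ) one_ne_zero
  · exact isUnit_det_add_smul_onesMat (hcol γ) (hinj γ hγ) (by positivity)
  · exact isUnit_det_transpose_mul_self_fromRows (hinj γ hγ)
  · simpa using isUnit_det_add_smul_onesMat (hcol 0) (hinj 0 le_rfl) (by positivity)
end

section
/- (Lemma A.2, part 2.) Under the hypotheses: n ≥ 2, Q = diag(q_1,…,q_n) with q_i > 0, L_c the Laplacian of a connected undirected graph, Q̄ := Q^{-1}𝟙𝟙ᵀQ^{-1}/(𝟙ᵀQ^{-1}𝟙) − Q^{-1}, Φ := −L_cQ + (1/n)𝟙𝟙ᵀ, γ_c > 0, γ > 0, 0 < θ < 1 with γ‖Φ^{-1}Q̄‖ ≤ θ, and d̃ ∈ ℝ^n, define x̂ := γ_c (𝟙𝟙ᵀQ^{-1}/(𝟙ᵀQ^{-1}𝟙)) (I − γ(γQ̄ + Φ)^{-1}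 Q̄) Q̄ Q d̃. Then ‖x̂‖ ≤ (γ_c/(𝟙ᵀQ^{-1}𝟙)) ( ‖𝟙𝟙ᵀQ^{-1} Q̄ Q d̃‖ + (γ/(1 − θ)) ‖𝟙𝟙ᵀQ^{-1}‖ · ‖Φ^{-1} Q̄² Q d̃‖ ). -/
open Matrix Filter

/-! ### Auxiliary machinery -/

/-- The continuous linear map on Euclidean space induced by a square matrix. -/
noncomputable def matCLM {k : ℕ} (A : Matrix (Fin k) (Fin k) ℝ) :
    EuclideanSpace ℝ (Fin k) →L[ℝ] EuclideanSpace ℝ (Fin k) :=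
  LinearMap.toContinuousLinearMap (Matrix.toEuclideanLin A)

lemma matOpNorm_eq_norm_matCLM {k : ℕ} (A : Matrix (Fin k) (Fin k) ℝ) :
    matOpNorm A = ‖matCLM A‖ := rfl

lemma matCLM_apply {k : ℕ} (A : Matrix (Fin k) (Fin k) ℝ) (v : Fin k → ℝ) :
    matCLM A ((WithLp.equiv 2 (Fin k → ℝ)).symm v) =
      (WithLp.equiv 2 (Fin k → ℝ)).symm (A *ᵥ v) := rfl

lemma euclNorm_mulVec {k : ℕ} (A : Matrix (Fin k) (Fin k) ℝ) (v : Fin k → ℝ) :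
    euclNorm (A *ᵥ v) = ‖matCLM A ((WithLp.equiv 2 (Fin k → ℝ)).symm v)‖ := rfl

lemma matCLM_coe {k : ℕ} (A : Matrix (Fin k) (Fin k) ℝ) :
    (matCLM A : EuclideanSpace ℝ (Fin k) →ₗ[ℝ] EuclideanSpace ℝ (Fin k)) =
      Matrix.toEuclideanLin A :=
  LinearMap.coe_toContinuousLinearMap _

lemma matCLM_injective {k : ℕ} : Function.Injective (matCLM (k := k)) := by
  intro A B h
  have h2 : (Matrix.toEuclideanLin A : EuclideanSpace ℝ (Fin k) →ₗ[ℝ] _) =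
      Matrix.toEuclideanLin B := by
    rw [← matCLM_coe, ← matCLM_coe, h]
  exact Matrix.toEuclideanLin.injective h2

lemma matCLM_mul {k : ℕ} (A B : Matrix (Fin k) (Fin k) ℝ) :
    matCLM (A * B) = matCLM A * matCLM B := by
  ext1 v
  show Matrix.toEuclideanLin (A * B) v = Matrix.toEuclideanLin A (Matrix.toEuclideanLin B v)
  simp [Matrix.toEuclideanLin_apply, Matrix.mulVec_mulVec]

lemma matCLM_one {k : ℕ} : matCLM (1 : Matrix (Fin k) (Fin k) ℝ) = 1 := by
  ext1 v
  show Matrix.toEuclideanLin (1 : Matrix (Fin k) (Fin k) ℝ) v = v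
  simp [Matrix.toEuclideanLin_apply]

lemma matCLM_add {k : ℕ} (A B : Matrix (Fin k) (Fin k) ℝ) :
    matCLM (A + B) = matCLM A + matCLM B := by
  ext1 v
  show Matrix.toEuclideanLin (A + B) v = Matrix.toEuclideanLin A v + Matrix.toEuclideanLin B v
  simp

lemma matCLM_smul {k : ℕ} (c : ℝ) (A : Matrix (Fin k) (Fin k) ℝ) :
    matCLM (c • A) = c • matCLM A := by
  ext1 v
  show Matrix.toEuclideanLin (c • A) v = c • Matrix.toEuclideanLin A v
  simp

set_option maxHeartbeats 1000000 in
/-- Lemma A.2, part 2: bound on the steady-state error `x̂`. -/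
theorem lemmaA2_part2 {n : ℕ} (hn : 2 ≤ n)
    (q : Fin n → ℝ) (hq : ∀ i, 0 < q i)
    (Lc : Matrix (Fin n) (Fin n) ℝ) (hsymm : Lc.IsSymm)
    (hoff : ∀ i j, i ≠ j → Lc i j ≤ 0)
    (hLc1 : Lc *ᵥ onesVec n = 0)
    (hker : LinearMap.ker Lc.mulVecLin = Submodule.span ℝ {onesVec n})
    (Q Qinv Qbar Φ : Matrix (Fin n) (Fin n) ℝ)
    (hQ : Q = Matrix.diagonal q)
    (hQinv : Qinv = Matrix.diagonal fun i => (q i)⁻¹)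
    (hQbar : Qbar =
      (onesVec n ⬝ᵥ (Qinv *ᵥ onesVec n))⁻¹ • (Qinv * onesMat n * Qinv) - Qinv)
    (hΦ : Φ = -(Lc * Q) + (n : ℝ)⁻¹ • onesMat n)
    (γc γ θ : ℝ) (hγc : 0 < γc) (hγ : 0 < γ) (hθ0 : 0 < θ) (hθ1 : θ < 1)
    (hγθ : γ * matOpNorm (Φ⁻¹ * Qbar) ≤ θ)
    (dtil : Fin n → ℝ)
    (xhat : Fin n → ℝ)
    (hxhat : xhat = γc • ((onesVec n ⬝ᵥ (Qinv *ᵥ onesVec n))⁻¹ •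
      ((onesMat n * Qinv) *ᵥ
        ((1 - γ • ((γ • Qbar + Φ)⁻¹ * Qbar)) *ᵥ ((Qbar * Q) *ᵥ dtil))))) :
    euclNorm xhat ≤ γc / (onesVec n ⬝ᵥ (Qinv *ᵥ onesVec n)) *
      (euclNorm ((onesMat n * Qinv * Qbar * Q) *ᵥ dtil) +
        γ / (1 - θ) * matOpNorm (onesMat n * Qinv) *
          euclNorm ((Φ⁻¹ * (Qbar * Qbar * Q)) *ᵥ dtil)) := by
  classical
  have hn0 : (n : ℝ) ≠ 0 := Nat.cast_ne_zero.mpr (by omega)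
  have hne : Nonempty (Fin n) := ⟨⟨0, by omega⟩⟩
  -- the scalar s = 𝟙ᵀ Q⁻¹ 𝟙
  set s : ℝ := onesVec n ⬝ᵥ (Qinv *ᵥ onesVec n) with hs_def
  have hQinv1 : Qinv *ᵥ onesVec n = fun i => (q i)⁻¹ := by
    funext i
    simp [hQinv, Matrix.mulVec_diagonal, onesVec]
  have hs_sum : s = ∑ i, (q i)⁻¹ := by
    simp [hs_def, hQinv1, dotProduct, onesVec]
  have hs_pos : 0 < s := by
    rw [hs_sum]
    exact Finset.sum_pos (fun i _ => inv_pos.mpr (hq i)) ⟨⟨0, by omega⟩, Finset.mem_univ _⟩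
  -- Φ is invertible
  have hΦcore : ∀ x : Fin n → ℝ, Φ *ᵥ x = 0 → x = 0 := by
    intro x hx
    set S : ℝ := ∑ j, x j with hS_def
    have hones : onesMat n *ᵥ x = fun _ => S := by
      funext i; simp [onesMat, Matrix.mulVec, dotProduct, hS_def]
    have hΦx : -((Lc * Q) *ᵥ x) + (n : ℝ)⁻¹ • (onesMat n *ᵥ x) = 0 := by
      rw [← Matrix.neg_mulVec, ← Matrix.smul_mulVec, ← Matrix.add_mulVec, ← hΦ]
      exact hx
    have hdotLcQ : onesVec n ⬝ᵥ ((Lc * Q) *ᵥ x) = 0 := by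
      rw [Matrix.dotProduct_mulVec, ← Matrix.vecMul_vecMul]
      have : onesVec n ᵥ* Lc = 0 := by
        rw [← Matrix.mulVec_transpose, hsymm.eq, hLc1]
      rw [this]
      simp [Matrix.zero_vecMul]
    have hSzero : S = 0 := by
      have h1 : onesVec n ⬝ᵥ (-((Lc * Q) *ᵥ x) + (n : ℝ)⁻¹ • (onesMat n *ᵥ x)) = 0 := by
        rw [hΦx]; simp
      have h2 : onesVec n ⬝ᵥ (fun _ => S : Fin n → ℝ) = (n : ℝ) * S := by
        simp [dotProduct, onesVec, Finset.sum_const, mul_comm]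
      rw [dotProduct_add, dotProduct_neg, hdotLcQ, dotProduct_smul,
        hones, h2, neg_zero, zero_add, smul_eq_mul, ← mul_assoc,
        inv_mul_cancel₀ hn0, one_mul] at h1
      exact h1
    have hLcQx : (Lc * Q) *ᵥ x = 0 := by
      have : onesMat n *ᵥ x = 0 := by
        rw [hones, hSzero]; funext i; simp
      rw [this, smul_zero, add_zero, neg_eq_zero] at hΦx
      exact hΦx
    have hmem : Q *ᵥ x ∈ LinearMap.ker Lc.mulVecLin := by
      rw [LinearMap.mem_ker]
      show Lc *ᵥ (Q *ᵥ x) = 0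
      rw [Matrix.mulVec_mulVec]
      exact hLcQx
    rw [hker, Submodule.mem_span_singleton] at hmem
    obtain ⟨c, hc⟩ := hmem
    have hx_eq : ∀ i, x i = c * (q i)⁻¹ := by
      intro i
      have hci : q i * x i = c := by
        have := congrFun hc i
        simpa [hQ, Matrix.mulVec_diagonal, onesVec] using this.symm
      have hqi := (hq i).ne'
      field_simp [hqi] at hci ⊢
      linarith [hci]
    have hczero : c = 0 := by
      have : S = c * s := by
        rw [hS_def, hs_sum, Finset.mul_sum]
        exact Finset.sum_congr rfl fun i _ => hx_eq i
      rw [hSzero] at this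
      rcases mul_eq_zero.mp this.symm with h | h
      · exact h
      · exact absurd h hs_pos.ne'
    funext i
    simp [hx_eq i, hczero]
  have hΦinj : Function.Injective Φ.mulVec := by
    intro x y hxy
    have : Φ *ᵥ (x - y) = 0 := by
      rw [Matrix.mulVec_sub, hxy, sub_self]
    have := hΦcore _ this
    exact sub_eq_zero.mp this
  have hΦunit : IsUnit Φ := Matrix.mulVec_injective_iff_isUnit.mp hΦinj
  have hΦdet : IsUnit Φ.det := (Matrix.isUnit_iff_isUnit_det Φ).mp hΦunit
  -- the CLM picture
  set Tm : Matrix (Fin n) (Fin n) ℝ := Φ⁻¹ * Qbar with hTm_def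
  set T := matCLM Tm with hT_def
  clear_value Tm
  have hTnorm : γ * ‖T‖ ≤ θ := hγθ
  have hγT : ‖-(γ • T)‖ < 1 := by
    rw [norm_neg, norm_smul γ T, Real.norm_of_nonneg hγ.le]
    exact lt_of_le_of_lt hTnorm hθ1
  set U : (EuclideanSpace ℝ (Fin n) →L[ℝ] EuclideanSpace ℝ (Fin n))ˣ :=
    Units.oneSub (-(γ • T)) hγT with hU_def
  have hUval : (U : EuclideanSpace ℝ (Fin n) →L[ℝ] EuclideanSpace ℝ (Fin n)) = 1 + γ • T := by
    rw [hU_def, Units.val_oneSub, sub_neg_eq_add]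
  clear_value U
  clear_value T
  -- bound on the inverse
  have hUinv_eq : (↑U⁻¹ : EuclideanSpace ℝ (Fin n) →L[ℝ] EuclideanSpace ℝ (Fin n)) =
      1 - (γ • T) * ↑U⁻¹ := by
    have h1 := U.mul_inv
    rw [hUval, add_mul, one_mul] at h1
    exact eq_sub_of_add_eq h1
  have hUinv_norm : ‖(↑U⁻¹ : EuclideanSpace ℝ (Fin n) →L[ℝ] EuclideanSpace ℝ (Fin n))‖ ≤
      (1 - θ)⁻¹ := by
    have hν0 : (0:ℝ) ≤ ‖(↑U⁻¹ : EuclideanSpace ℝ (Fin n) →L[ℝ] EuclideanSpace ℝ (Fin n))‖ :=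
      norm_nonneg _
    have e1 : ‖(↑U⁻¹ : EuclideanSpace ℝ (Fin n) →L[ℝ] EuclideanSpace ℝ (Fin n))‖ ≤
        ‖(1 : EuclideanSpace ℝ (Fin n) →L[ℝ] EuclideanSpace ℝ (Fin n))‖ +
        ‖(γ • T) * (↑U⁻¹ : EuclideanSpace ℝ (Fin n) →L[ℝ] EuclideanSpace ℝ (Fin n))‖ := by
      nth_rewrite 1 [hUinv_eq]
      exact norm_sub_le _ _
    have e2 : ‖(γ • T) * (↑U⁻¹ : EuclideanSpace ℝ (Fin n) →L[ℝ] EuclideanSpace ℝ (Fin n))‖ ≤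
        γ * ‖T‖ * ‖(↑U⁻¹ : EuclideanSpace ℝ (Fin n) →L[ℝ] EuclideanSpace ℝ (Fin n))‖ := by
      have h := norm_mul_le (γ • T)
        (↑U⁻¹ : EuclideanSpace ℝ (Fin n) →L[ℝ] EuclideanSpace ℝ (Fin n))
      rwa [norm_smul γ T, Real.norm_of_nonneg hγ.le] at h
    have e3 : ‖(1 : EuclideanSpace ℝ (Fin n) →L[ℝ] EuclideanSpace ℝ (Fin n))‖ ≤ 1 :=
      ContinuousLinearMap.norm_id_le
    have e4 : γ * ‖T‖ * ‖(↑U⁻¹ : EuclideanSpace ℝ (Fin n) →L[ℝ] EuclideanSpace ℝ (Fin n))‖ ≤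
        θ * ‖(↑U⁻¹ : EuclideanSpace ℝ (Fin n) →L[ℝ] EuclideanSpace ℝ (Fin n))‖ :=
      mul_le_mul_of_nonneg_right hTnorm hν0
    have hθ' : 0 < 1 - θ := by linarith
    have h2 : ‖(↑U⁻¹ : EuclideanSpace ℝ (Fin n) →L[ℝ] EuclideanSpace ℝ (Fin n))‖ * (1 - θ) ≤ 1 := by
      nlinarith
    have h3 := (le_div_iff₀ hθ').mpr h2
    rwa [one_div] at h3
  -- matrix B realizing U⁻¹
  set B : Matrix (Fin n) (Fin n) ℝ :=
    Matrix.toEuclideanLin.symm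
      ((↑U⁻¹ : EuclideanSpace ℝ (Fin n) →L[ℝ] EuclideanSpace ℝ (Fin n)) :
        EuclideanSpace ℝ (Fin n) →ₗ[ℝ] EuclideanSpace ℝ (Fin n)) with hB_def
  have hBclm : matCLM B = (↑U⁻¹ : EuclideanSpace ℝ (Fin n) →L[ℝ] EuclideanSpace ℝ (Fin n)) := by
    apply ContinuousLinearMap.coe_injective
    rw [matCLM_coe, hB_def, LinearEquiv.apply_symm_apply]
  clear_value B
  have hmat1 : matCLM (1 + γ • Tm) = (↑U : EuclideanSpace ℝ (Fin n) →L[ℝ] _) := by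
    rw [matCLM_add, matCLM_one, matCLM_smul, hUval, hT_def]
  have hBright : (1 + γ • Tm) * B = 1 := by
    apply matCLM_injective
    rw [matCLM_mul, matCLM_one, hmat1, hBclm, U.mul_inv]
  have hBinv : (1 + γ • Tm)⁻¹ = B := Matrix.inv_eq_right_inv hBright
  -- identity for (γ Qbar + Φ)⁻¹ Qbar
  have hfact : γ • Qbar + Φ = Φ * (1 + γ • Tm) := by
    rw [mul_add, mul_one, Matrix.mul_smul, hTm_def, Matrix.mul_nonsing_inv_cancel_left _ _ hΦdet]
    abel
  have hCid : (γ • Qbar + Φ)⁻¹ * Qbar = B * Tm := by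
    rw [hfact, Matrix.mul_inv_rev, hBinv, Matrix.mul_assoc, ← hTm_def]
  -- main estimate
  set w : Fin n → ℝ := (Qbar * Q) *ᵥ dtil with hw_def
  set wE : EuclideanSpace ℝ (Fin n) := (WithLp.equiv 2 (Fin n → ℝ)).symm w with hwE_def
  set M : Matrix (Fin n) (Fin n) ℝ := onesMat n * Qinv with hM_def
  have hxhat2 : xhat = (γc * s⁻¹) • (M *ᵥ (w - γ • ((B * Tm) *ᵥ w))) := by
    rw [hxhat, ← hCid]
    rw [smul_smul]
    congr 1
    congr 1
    rw [Matrix.sub_mulVec, Matrix.one_mulVec, Matrix.smul_mulVec]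
  have hEnorm : euclNorm xhat =
      (γc * s⁻¹) * ‖matCLM M (wE - γ • ((↑U⁻¹ : EuclideanSpace ℝ (Fin n) →L[ℝ]
        EuclideanSpace ℝ (Fin n)) (T wE)))‖ := by
    rw [hxhat2]
    rw [euclNorm]
    have hsm : (WithLp.equiv 2 (Fin n → ℝ)).symm ((γc * s⁻¹) • (M *ᵥ (w - γ • ((B * Tm) *ᵥ w))))
        = (γc * s⁻¹) • (WithLp.equiv 2 (Fin n → ℝ)).symm (M *ᵥ (w - γ • ((B * Tm) *ᵥ w))) := rfl
    rw [hsm, norm_smul, Real.norm_of_nonneg (by positivity)]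
    congr 2
    rw [← matCLM_apply]
    congr 1
    have : (WithLp.equiv 2 (Fin n → ℝ)).symm (w - γ • ((B * Tm) *ᵥ w))
        = wE - γ • (WithLp.equiv 2 (Fin n → ℝ)).symm ((B * Tm) *ᵥ w) := rfl
    rw [this]
    congr 2
    rw [← matCLM_apply, matCLM_mul, hBclm, ContinuousLinearMap.mul_apply, hT_def, hwE_def]
  -- identify the RHS pieces
  have hrhs1 : euclNorm ((M * Qbar * Q) *ᵥ dtil) = ‖matCLM M wE‖ := by
    have h : (M * Qbar * Q) *ᵥ dtil = M *ᵥ w := by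
      rw [hw_def, Matrix.mulVec_mulVec, Matrix.mul_assoc]
    rw [h, euclNorm_mulVec, ← hwE_def]
  have hrhs2 : euclNorm ((Φ⁻¹ * (Qbar * Qbar * Q)) *ᵥ dtil) = ‖T wE‖ := by
    have : (Φ⁻¹ * (Qbar * Qbar * Q)) *ᵥ dtil = Tm *ᵥ w := by
      rw [hTm_def, hw_def, Matrix.mulVec_mulVec]
      congr 1
      simp only [Matrix.mul_assoc]
    rw [this, hT_def, euclNorm_mulVec, ← hwE_def]
  clear_value s w wE M
  have hkey : ‖matCLM M (wE - γ • ((↑U⁻¹ : EuclideanSpace ℝ (Fin n) →L[ℝ]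
        EuclideanSpace ℝ (Fin n)) (T wE)))‖ ≤
      ‖matCLM M wE‖ + γ * (1 - θ)⁻¹ * ‖matCLM M‖ * ‖T wE‖ := by
    have hsplit : matCLM M (wE - γ • ((↑U⁻¹ : EuclideanSpace ℝ (Fin n) →L[ℝ]
          EuclideanSpace ℝ (Fin n)) (T wE))) =
        matCLM M wE - γ • matCLM M ((↑U⁻¹ : EuclideanSpace ℝ (Fin n) →L[ℝ]
          EuclideanSpace ℝ (Fin n)) (T wE)) := by
      rw [(matCLM M).map_sub, (matCLM M).map_smul]
    have n1 : ‖matCLM M ((↑U⁻¹ : EuclideanSpace ℝ (Fin n) →L[ℝ]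
          EuclideanSpace ℝ (Fin n)) (T wE))‖ ≤
        ‖matCLM M‖ * ((1 - θ)⁻¹ * ‖T wE‖) := by
      have a1 := ContinuousLinearMap.le_opNorm (matCLM M)
        ((↑U⁻¹ : EuclideanSpace ℝ (Fin n) →L[ℝ] EuclideanSpace ℝ (Fin n)) (T wE))
      have a2 := ContinuousLinearMap.le_opNorm
        (↑U⁻¹ : EuclideanSpace ℝ (Fin n) →L[ℝ] EuclideanSpace ℝ (Fin n)) (T wE)
      have a3 : ‖(↑U⁻¹ : EuclideanSpace ℝ (Fin n) →L[ℝ] EuclideanSpace ℝ (Fin n)) (T wE)‖ ≤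
          (1 - θ)⁻¹ * ‖T wE‖ :=
        a2.trans (mul_le_mul_of_nonneg_right hUinv_norm (norm_nonneg _))
      exact a1.trans (mul_le_mul_of_nonneg_left a3 (norm_nonneg _))
    have n2 : γ * ‖matCLM M ((↑U⁻¹ : EuclideanSpace ℝ (Fin n) →L[ℝ]
          EuclideanSpace ℝ (Fin n)) (T wE))‖ ≤
        γ * (‖matCLM M‖ * ((1 - θ)⁻¹ * ‖T wE‖)) :=
      mul_le_mul_of_nonneg_left n1 hγ.le
    have n2' : γ * (‖matCLM M‖ * ((1 - θ)⁻¹ * ‖T wE‖)) =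
        γ * (1 - θ)⁻¹ * ‖matCLM M‖ * ‖T wE‖ := by ring
    have hsn : ‖γ • matCLM M ((↑U⁻¹ : EuclideanSpace ℝ (Fin n) →L[ℝ]
          EuclideanSpace ℝ (Fin n)) (T wE))‖ =
        γ * ‖matCLM M ((↑U⁻¹ : EuclideanSpace ℝ (Fin n) →L[ℝ]
          EuclideanSpace ℝ (Fin n)) (T wE))‖ := by
      rw [norm_smul γ _, Real.norm_of_nonneg hγ.le]
    rw [hsplit]
    refine (norm_sub_le _ _).trans ?_
    rw [hsn]
    linarith
  rw [hEnorm, hrhs1, hrhs2, matOpNorm_eq_norm_matCLM, div_eq_mul_inv γc,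
    div_eq_mul_inv γ]
  calc (γc * s⁻¹) * ‖matCLM M (wE - γ • ((↑U⁻¹ : EuclideanSpace ℝ (Fin n) →L[ℝ]
        EuclideanSpace ℝ (Fin n)) (T wE)))‖
      ≤ (γc * s⁻¹) * (‖matCLM M wE‖ + γ * (1 - θ)⁻¹ * ‖matCLM M‖ * ‖T wE‖) := by
        gcongr
      _ = γc * s⁻¹ * (‖matCLM M wE‖ + γ * (1 - θ)⁻¹ * ‖matCLM M‖ * ‖T wE‖) := by ring
end

section
/- (Lemma A.3, bound on û_e.) Let n ≥ 2, Q = diag(q_1,…,q_n) with q_i > 0, L_c the Laplacian of a connected undirected graph, Q̄ := Q^{-1}𝟙𝟙ᵀQ^{-1}/(𝟙ᵀQ^{-1}𝟙) − Q^{-1}, Φ := −L_cQ + (1/n)𝟙𝟙ᵀ, γ > 0, 0 < θ < 1 with γ‖Φ^{-1}Q̄‖ ≤ θ, and d̃ ∈ ℝ^n. Let B⁺ ∈ ℝ^{m×n} be a matrix such that B(B⁺v) = v for every v ∈ ℝ^n with 𝟙ᵀv = 0 (a generalized inverse of the incidence matrix B on Im(B) = span{𝟙}^⊥), and let ū_e,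 u_e^+ ∈ ℝ^m satisfy 0 < ū_e < u_e^+ componentwise. Define û_e := −γ B⁺ (γQ̄ + Φ)^{-1} Q̄² Q d̃ and δ_e := min{ min_i (u_e^+ − ū_e)_i , min_j (ū_e)_j } / ‖B⁺‖ (with δ_e := +∞ if B⁺ = 0). If γ ‖Φ^{-1} Q̄² Q d̃‖ < (1 − θ) δ_e, then ‖û_e‖ < min{ min_i (u_e^+ − ū_e)_i , min_j (ū_e)_j }. -/
/-!
`Φ` is invertible: `𝟙ᵀ Φ = 𝟙ᵀ` forces `Φ x = 0` to have coordinate sum zero, then `L_c Q x = 0`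
makes `Q x` a multiple of `𝟙`, and `𝟙ᵀ Q⁻¹ 𝟙 > 0` makes the multiple zero.
Since `Φ⁻¹ (γ Q̄ + Φ) = I + γ Φ⁻¹ Q̄` with `‖γ Φ⁻¹ Q̄‖ ≤ θ < 1`, the matrix `γ Q̄ + Φ` is invertible
and `(1 - θ) ‖(γ Q̄ + Φ)⁻¹ w‖ ≤ ‖Φ⁻¹ w‖`. Hence `‖û_e‖ ≤ γ ‖B⁺‖ ‖Φ⁻¹ Q̄² Q d̃‖ / (1 - θ)`,
which the gain condition bounds by the margin.
-/

open Matrix Filter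

section EuclNorm

variable {k l : ℕ}

lemma euclNorm_eq_norm_toLp (v : Fin k → ℝ) : euclNorm v = ‖WithLp.toLp 2 v‖ := rfl

lemma euclNorm_nonneg (v : Fin k → ℝ) : 0 ≤ euclNorm v := norm_nonneg _

@[simp]
lemma euclNorm_zero : euclNorm (0 : Fin k → ℝ) = 0 := by
  simp [euclNorm_eq_norm_toLp]

lemma euclNorm_eq_zero {v : Fin k → ℝ} : euclNorm v = 0 ↔ v = 0 := by
  simp [euclNorm_eq_norm_toLp]

@[simp]
lemma euclNorm_neg (v : Fin k → ℝ) : euclNorm (-v) = euclNorm v := by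
  simp [euclNorm_eq_norm_toLp]

lemma euclNorm_smul (c : ℝ) (v : Fin k → ℝ) : euclNorm (c • v) = |c| * euclNorm v := by
  simp [euclNorm_eq_norm_toLp, norm_smul]

lemma euclNorm_sub_le (v w : Fin k → ℝ) : euclNorm (v - w) ≤ euclNorm v + euclNorm w := by
  simpa [euclNorm_eq_norm_toLp] using norm_sub_le (WithLp.toLp 2 v) (WithLp.toLp 2 w)

lemma euclNorm_mulVec_le (A : Matrix (Fin k) (Fin l) ℝ) (x : Fin l → ℝ) :
    euclNorm (A *ᵥ x) ≤ matOpNorm A * euclNorm x := by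
  simpa [euclNorm_eq_norm_toLp, matOpNorm, Matrix.toLpLin_toLp] using
    (LinearMap.toContinuousLinearMap (Matrix.toEuclideanLin A)).le_opNorm (WithLp.toLp 2 x)

lemma matOpNorm_nonneg (A : Matrix (Fin k) (Fin l) ℝ) : 0 ≤ matOpNorm A := norm_nonneg _

@[simp]
lemma matOpNorm_zero : matOpNorm (0 : Matrix (Fin k) (Fin l) ℝ) = 0 := by
  simp [matOpNorm]

end EuclNorm

section Perturbation

variable {k : ℕ} {Φ E : Matrix (Fin k) (Fin k) ℝ} {γ θ : ℝ}

lemma one_sub_mul_euclNorm_le_of_perturb (hΦ : IsUnit Φ.det) (hγ : 0 ≤ γ)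
    (hγθ : γ * matOpNorm (Φ⁻¹ * E) ≤ θ) (v : Fin k → ℝ) :
    (1 - θ) * euclNorm v ≤ euclNorm (Φ⁻¹ *ᵥ ((γ • E + Φ) *ᵥ v)) := by
  set u := γ • ((Φ⁻¹ * E) *ᵥ v)
  have hexpand : Φ⁻¹ *ᵥ ((γ • E + Φ) *ᵥ v) = v + u := by
    rw [Matrix.mulVec_mulVec, Matrix.mul_add, Matrix.mul_smul, Matrix.nonsing_inv_mul _ hΦ,
      Matrix.add_mulVec, Matrix.smul_mulVec, Matrix.one_mulVec, add_comm]
  have hsmall : euclNorm u ≤ θ * euclNorm v :=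
    calc euclNorm u = γ * euclNorm ((Φ⁻¹ * E) *ᵥ v) := by rw [euclNorm_smul, abs_of_nonneg hγ]
      _ ≤ γ * (matOpNorm (Φ⁻¹ * E) * euclNorm v) :=
        mul_le_mul_of_nonneg_left (euclNorm_mulVec_le _ _) hγ
      _ ≤ θ * euclNorm v := by
        rw [← mul_assoc]; exact mul_le_mul_of_nonneg_right hγθ (euclNorm_nonneg v)
  have htriangle : euclNorm v ≤ euclNorm (v + u) + euclNorm u := by
    simpa using euclNorm_sub_le (v + u) u
  rw [hexpand]
  linarith

lemma isUnit_det_smul_add_of_perturb (hΦ : IsUnit Φ.det) (hγ : 0 ≤ γ)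
    (hγθ : γ * matOpNorm (Φ⁻¹ * E) ≤ θ) (hθ : θ < 1) : IsUnit (γ • E + Φ).det := by
  rw [isUnit_iff_ne_zero]
  intro hdet
  obtain ⟨v, hv, hKv⟩ := Matrix.exists_mulVec_eq_zero_iff.mpr hdet
  have hbound : (1 - θ) * euclNorm v ≤ 0 := by
    simpa [hKv] using one_sub_mul_euclNorm_le_of_perturb hΦ hγ hγθ v
  exact hv (euclNorm_eq_zero.mp
    (le_antisymm (by nlinarith [euclNorm_nonneg v]) (euclNorm_nonneg v)))

lemma one_sub_mul_euclNorm_inv_mulVec_le_of_perturb (hΦ : IsUnit Φ.det) (hγ : 0 ≤ γ)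
    (hγθ : γ * matOpNorm (Φ⁻¹ * E) ≤ θ) (hθ : θ < 1) (w : Fin k → ℝ) :
    (1 - θ) * euclNorm ((γ • E + Φ)⁻¹ *ᵥ w) ≤ euclNorm (Φ⁻¹ *ᵥ w) := by
  have hK := isUnit_det_smul_add_of_perturb hΦ hγ hγθ hθ
  simpa [Matrix.mulVec_mulVec, Matrix.mul_nonsing_inv _ hK] using
    one_sub_mul_euclNorm_le_of_perturb hΦ hγ hγθ ((γ • E + Φ)⁻¹ *ᵥ w)

end Perturbation

lemma onesVec_dotProduct {k : ℕ} (x : Fin k → ℝ) : onesVec k ⬝ᵥ x = ∑ i, x i := by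
  simp [onesVec, dotProduct]

lemma onesMat_mulVec_s13 {k : ℕ} (x : Fin k → ℝ) : onesMat k *ᵥ x = fun _ => ∑ i, x i := by
  funext i; simp [onesMat, Matrix.mulVec, dotProduct]

lemma isUnit_det_neg_mul_diagonal_add_onesMat {n : ℕ} {q : Fin n → ℝ} (hq : ∀ i, 0 < q i)
    {Lc : Matrix (Fin n) (Fin n) ℝ} (hsymm : Lc.IsSymm)
    (hker : LinearMap.ker Lc.mulVecLin = Submodule.span ℝ {onesVec n}) :
    IsUnit (-(Lc * Matrix.diagonal q) + (n : ℝ)⁻¹ • onesMat n).det := by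
  rcases Nat.eq_zero_or_pos n with rfl | hn
  · simp
  rw [isUnit_iff_ne_zero]
  intro hdet
  obtain ⟨x, hx0, hx⟩ := Matrix.exists_mulVec_eq_zero_iff.mpr hdet
  apply hx0
  rw [Matrix.add_mulVec, Matrix.neg_mulVec, ← Matrix.mulVec_mulVec, Matrix.smul_mulVec] at hx
  have hLc_ones : Lc *ᵥ onesVec n = 0 := by
    have : onesVec n ∈ LinearMap.ker Lc.mulVecLin := hker ▸ Submodule.mem_span_singleton_self _
    simpa using this
  have hones_Lc : onesVec n ᵥ* Lc = 0 := by
    rw [← Matrix.mulVec_transpose, hsymm.eq, hLc_ones]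
  have hsum : ∑ i, x i = 0 := by
    have h := congrArg (onesVec n ⬝ᵥ ·) hx
    simp only [dotProduct_add, dotProduct_neg, Matrix.dotProduct_mulVec, hones_Lc,
      dotProduct_smul, onesMat_mulVec_s13, onesVec_dotProduct] at h
    simpa [hn.ne'] using h
  have hQx : Matrix.diagonal q *ᵥ x ∈ LinearMap.ker Lc.mulVecLin := by
    have hones_x : onesMat n *ᵥ x = 0 := by
      rw [onesMat_mulVec_s13, hsum]
      rfl
    simpa [hones_x] using hx
  obtain ⟨c, hc⟩ := Submodule.mem_span_singleton.mp (hker ▸ hQx)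
  have hxc : ∀ i, x i = c * (q i)⁻¹ := by
    intro i
    have := congrFun hc i
    simp only [Pi.smul_apply, onesVec, smul_eq_mul, mul_one, Matrix.mulVec_diagonal] at this
    field_simp [(hq i).ne']
    linarith
  have hc0 : c = 0 := by
    have hpos : 0 < ∑ i, (q i)⁻¹ :=
      Finset.sum_pos (fun i _ => inv_pos.mpr (hq i)) ⟨⟨0, hn⟩, Finset.mem_univ _⟩
    simp only [hxc, ← Finset.mul_sum] at hsum
    exact (mul_eq_zero.mp hsum).resolve_right hpos.ne'
  funext i
  simp [hxc, hc0]

lemma Finite.ciInf_pos {ι : Type*} [Finite ι] [Nonempty ι] {f : ι → ℝ} (hf : ∀ i, 0 < f i) :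
    0 < ⨅ i, f i := by
  obtain ⟨i, hi⟩ := Finite.exists_min f
  exact (hf i).trans_le (le_ciInf hi)

/-- The case `δ_e = +∞` (when `B⁺ = 0`) is encoded by conditioning the gain hypothesis on
`B⁺ ≠ 0`. -/
theorem lemmaA3_ue_bound_general {n m : ℕ} (hm : 1 ≤ m)
    (q : Fin n → ℝ) (hq : ∀ i, 0 < q i)
    (Lc : Matrix (Fin n) (Fin n) ℝ) (hsymm : Lc.IsSymm)
    (hker : LinearMap.ker Lc.mulVecLin = Submodule.span ℝ {onesVec n})
    (Q Qbar Φ : Matrix (Fin n) (Fin n) ℝ)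
    (hQ : Q = Matrix.diagonal q)
    (hΦ : Φ = -(Lc * Q) + (n : ℝ)⁻¹ • onesMat n)
    (γ θ : ℝ) (hγ : 0 < γ) (hθ1 : θ < 1)
    (hγθ : γ * matOpNorm (Φ⁻¹ * Qbar) ≤ θ)
    (dtil : Fin n → ℝ)
    (Bplus : Matrix (Fin m) (Fin n) ℝ)
    (ubare uep : Fin m → ℝ)
    (hfease : ∀ i, 0 < ubare i ∧ ubare i < uep i)
    (uhate : Fin m → ℝ)
    (huhate : uhate =
      -(γ • (Bplus *ᵥ ((γ • Qbar + Φ)⁻¹ *ᵥ ((Qbar * Qbar * Q) *ᵥ dtil)))))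
    (hγ_bound : Bplus ≠ 0 →
      γ * euclNorm ((Φ⁻¹ * (Qbar * Qbar * Q)) *ᵥ dtil) <
        (1 - θ) * (min (⨅ i, (uep - ubare) i) (⨅ j, ubare j) / matOpNorm Bplus)) :
    euclNorm uhate < min (⨅ i, (uep - ubare) i) (⨅ j, ubare j) := by
  set δ := min (⨅ i, (uep - ubare) i) (⨅ j, ubare j)
  have hδ : 0 < δ := by
    have : Nonempty (Fin m) := ⟨⟨0, hm⟩⟩
    exact lt_min (Finite.ciInf_pos fun i => sub_pos.mpr (hfease i).2)
      (Finite.ciInf_pos fun j => (hfease j).1)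
  have hΦ_unit : IsUnit Φ.det := hΦ ▸ hQ ▸ isUnit_det_neg_mul_diagonal_add_onesMat hq hsymm hker
  set a := euclNorm ((Φ⁻¹ * (Qbar * Qbar * Q)) *ᵥ dtil)
  set v := (γ • Qbar + Φ)⁻¹ *ᵥ ((Qbar * Qbar * Q) *ᵥ dtil)
  have hv : (1 - θ) * euclNorm v ≤ a := by
    simpa only [a, v, Matrix.mulVec_mulVec] using
      one_sub_mul_euclNorm_inv_mulVec_le_of_perturb hΦ_unit hγ.le hγθ hθ1
        ((Qbar * Qbar * Q) *ᵥ dtil)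
  have huhat : euclNorm uhate ≤ γ * matOpNorm Bplus * euclNorm v := by
    rw [huhate, euclNorm_neg, euclNorm_smul, abs_of_pos hγ, mul_assoc]
    exact mul_le_mul_of_nonneg_left (euclNorm_mulVec_le _ _) hγ.le
  rcases (matOpNorm_nonneg Bplus).eq_or_lt with hB | hB
  · rw [← hB, mul_zero, zero_mul] at huhat
    exact huhat.trans_lt hδ
  have hBne : Bplus ≠ 0 := by
    rintro rfl
    simp at hB
  have hγa : γ * a * matOpNorm Bplus < (1 - θ) * δ := by
    have := hγ_bound hBne
    rwa [← mul_div_assoc, lt_div_iff₀ hB] at this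
  have key : (1 - θ) * (γ * matOpNorm Bplus * euclNorm v) < (1 - θ) * δ :=
    calc (1 - θ) * (γ * matOpNorm Bplus * euclNorm v)
        = γ * matOpNorm Bplus * ((1 - θ) * euclNorm v) := by ring
      _ ≤ γ * matOpNorm Bplus * a := mul_le_mul_of_nonneg_left hv (by positivity)
      _ = γ * a * matOpNorm Bplus := by ring
      _ < (1 - θ) * δ := hγa
  exact huhat.trans_lt (lt_of_mul_lt_mul_left key (by linarith))

/-- Lemma A.3, bound on `û_e`. The case `δ_e = +∞` (when `B⁺ = 0`)
is encoded by conditioning the gain hypothesis on `B⁺ ≠ 0`. -/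
theorem lemmaA3_ue_bound {n m : ℕ} (hn : 2 ≤ n) (hm : 1 ≤ m)
    (q : Fin n → ℝ) (hq : ∀ i, 0 < q i)
    (Lc : Matrix (Fin n) (Fin n) ℝ) (hsymm : Lc.IsSymm)
    (hoff : ∀ i j, i ≠ j → Lc i j ≤ 0)
    (hLc1 : Lc *ᵥ onesVec n = 0)
    (hker : LinearMap.ker Lc.mulVecLin = Submodule.span ℝ {onesVec n})
    (Q Qinv Qbar Φ : Matrix (Fin n) (Fin n) ℝ)
    (hQ : Q = Matrix.diagonal q)
    (hQinv : Qinv = Matrix.diagonal fun i => (q i)⁻¹)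
    (hQbar : Qbar =
      (onesVec n ⬝ᵥ (Qinv *ᵥ onesVec n))⁻¹ • (Qinv * onesMat n * Qinv) - Qinv)
    (hΦ : Φ = -(Lc * Q) + (n : ℝ)⁻¹ • onesMat n)
    (γ θ : ℝ) (hγ : 0 < γ) (hθ0 : 0 < θ) (hθ1 : θ < 1)
    (hγθ : γ * matOpNorm (Φ⁻¹ * Qbar) ≤ θ)
    (dtil : Fin n → ℝ)
    (B : Matrix (Fin n) (Fin m) ℝ) (Bplus : Matrix (Fin m) (Fin n) ℝ)
    (hBplus : ∀ v : Fin n → ℝ, onesVec n ⬝ᵥ v = 0 → B *ᵥ (Bplus *ᵥ v) = v)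
    (ubare uep : Fin m → ℝ)
    (hfease : ∀ i, 0 < ubare i ∧ ubare i < uep i)
    (uhate : Fin m → ℝ)
    (huhate : uhate =
      -(γ • (Bplus *ᵥ ((γ • Qbar + Φ)⁻¹ *ᵥ ((Qbar * Qbar * Q) *ᵥ dtil)))))
    (hγ_bound : Bplus ≠ 0 →
      γ * euclNorm ((Φ⁻¹ * (Qbar * Qbar * Q)) *ᵥ dtil) <
        (1 - θ) * (min (⨅ i, (uep - ubare) i) (⨅ j, ubare j) / matOpNorm Bplus)) :
    euclNorm uhate < min (⨅ i, (uep - ubare) i) (⨅ j, ubare j) :=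
  lemmaA3_ue_bound_general hm q hq Lc hsymm hker Q Qbar Φ hQ hΦ γ θ hγ hθ1 hγθ dtil Bplus ubare uep
    hfease uhate huhate hγ_bound
end

section
/- (Lemma A.5, compactness of sublevel sets.) Let γ_c, γ_e ∈ ℝ with γ_e > 0, B ∈ ℝ^{n×m}, and let x_p^-, x_p^+ ∈ ℝ^n and x_e^-, x_e^+ ∈ ℝ^m satisfy componentwise x_p^- < 0 < x_p^+ and x_e^- < 0 < x_e^+. Define V : ℝ^n × ℝ^m × ℝ^n → ℝ by V(x̃, x̃_e, x̃_p) := ½‖x̃‖² + Σ_{i=1}^n ∫_0^{(x̃_p)_i} sat(y; (x_p^-)_i, (x_p^+)_i) dy + (1/γ_e²) Σ_{i=1}^m ∫_0^{−χ_i} sat(y; (x_e^-)_i, (x_e^+)_i) dy, where χ := γ_e x̃_e + γ_c Bᵀ x̃ (integrals of the scalar saturation function, oriented so that ∫_0^w of a function with the sign of y is nonnegative). Then V ≥ 0 everywhere, V(0,0,0) = 0, and for every D ≥ 0 the sublevel set 𝒬 := {(x̃, x̃_e, x̃_p) : V(x̃, x̃_e, x̃_p) ≤ D} is nonempty and compact.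 -/
/-!
Every term of `V` is nonnegative, so `V ≤ D` bounds each term by `D`. The primitive
`w ↦ ∫₀ʷ sat(y; l, u) dy` grows linearly beyond the thresholds `l < 0 < u`, so a bound on it
confines `w` to an interval; this boxes in `x̃ₚ` and `χ`, while `‖x̃‖ ≤ √(2D)` boxes in `x̃`.
Since `γe ≠ 0`, `x̃ₑ = γe⁻¹ (χ - γc Bᵀ x̃)` depends continuously on `(x̃, χ)`, so the sublevel set
lies in the continuous image of a compact box; being closed by continuity of `V`, it is compact.
-/

open Matrix Filter

lemma sat1_eq_max_min {l u : ℝ} (h : l ≤ u) (y : ℝ) : sat1 y l u = max l (min u y) := by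
  unfold sat1
  split_ifs with h₁ h₂
  · rw [min_eq_right (h₁.trans h), max_eq_left h₁]
  · rw [min_eq_left h₂, max_eq_right h]
  · rw [min_eq_right (not_le.mp h₂).le, max_eq_right (not_le.mp h₁).le]

lemma continuous_sat1 {l u : ℝ} (h : l ≤ u) : Continuous fun y => sat1 y l u := by
  simp only [sat1_eq_max_min h]
  fun_prop

lemma sat1_nonneg {l u y : ℝ} (hu : 0 ≤ u) (hy : 0 ≤ y) : 0 ≤ sat1 y l u := by
  unfold sat1
  split_ifs <;> linarith

lemma sat1_neg_bounds {l u : ℝ} (h : l ≤ u) (y : ℝ) : sat1 y (-u) (-l) = -sat1 (-y) l u := by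
  unfold sat1
  split_ifs <;> linarith

noncomputable def satIntegral (w l u : ℝ) : ℝ := ∫ y in (0 : ℝ)..w, sat1 y l u

section satIntegral

variable {l u : ℝ}

lemma satIntegral_neg (h : l ≤ u) (w : ℝ) : satIntegral (-w) (-u) (-l) = satIntegral w l u := by
  unfold satIntegral
  simp only [sat1_neg_bounds h, intervalIntegral.integral_neg,
    intervalIntegral.integral_comp_neg (fun y => sat1 y l u), neg_neg, neg_zero,
    intervalIntegral.integral_symm w 0]

lemma satIntegral_nonneg (hl : l ≤ 0) (hu : 0 ≤ u) (w : ℝ) : 0 ≤ satIntegral w l u := by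
  have of_nonneg : ∀ {l u w : ℝ}, 0 ≤ u → 0 ≤ w → 0 ≤ satIntegral w l u := fun hu hw =>
    intervalIntegral.integral_nonneg hw fun y hy => sat1_nonneg hu hy.1
  rcases le_total 0 w with hw | hw
  · exact of_nonneg hu hw
  · rw [← satIntegral_neg (hl.trans hu)]
    exact of_nonneg (neg_nonneg.mpr hl) (neg_nonneg.mpr hw)

lemma continuous_satIntegral (h : l ≤ u) : Continuous fun w => satIntegral w l u :=
  intervalIntegral.continuous_primitive (fun a b => (continuous_sat1 h).intervalIntegrable a b) 0

-- On `[0, u]` the integrand is nonnegative and on `[u, w]` it is the constant `u`.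
lemma mul_sub_le_satIntegral (hl : l ≤ 0) (hu : 0 ≤ u) {w : ℝ} (huw : u ≤ w) :
    u * (w - u) ≤ satIntegral w l u := by
  have hint : ∀ a b : ℝ, IntervalIntegrable (fun y => sat1 y l u) MeasureTheory.volume a b :=
    fun a b => (continuous_sat1 (hl.trans hu)).intervalIntegrable a b
  have hhead : 0 ≤ ∫ y in (0 : ℝ)..u, sat1 y l u := satIntegral_nonneg hl hu u
  have htail : ∫ y in u..w, sat1 y l u = (w - u) * u := by
    rw [intervalIntegral.integral_congr (g := fun _ => u), intervalIntegral.integral_const,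
      smul_eq_mul]
    intro y hy
    rw [Set.uIcc_of_le huw] at hy
    simp only [sat1, if_pos hy.1, ite_eq_right_iff]
    intro hyl
    linarith [hy.1]
  unfold satIntegral
  rw [← intervalIntegral.integral_add_adjacent_intervals (hint 0 u) (hint u w), htail]
  linarith

lemma le_of_satIntegral_le (hl : l ≤ 0) (hu : 0 < u) {w D : ℝ} (hw : satIntegral w l u ≤ D) :
    w ≤ u + D / u := by
  have hD : 0 ≤ D := (satIntegral_nonneg hl hu.le w).trans hw
  rcases le_total w u with hwu | huw
  · linarith [div_nonneg hD hu.le]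
  · have := (mul_sub_le_satIntegral hl hu.le huw).trans hw
    rw [mul_comm, ← le_div_iff₀ hu] at this
    linarith

lemma mem_Icc_of_satIntegral_le (hl : l < 0) (hu : 0 < u) {w D : ℝ}
    (hw : satIntegral w l u ≤ D) : w ∈ Set.Icc (l + D / l) (u + D / u) := by
  refine ⟨?_, le_of_satIntegral_le hl.le hu hw⟩
  rw [← satIntegral_neg (hl.trans hu).le] at hw
  have := le_of_satIntegral_le (neg_nonpos.mpr hu.le) (neg_pos.mpr hl) hw
  rw [div_neg] at this
  linarith

end satIntegral

lemma abs_apply_le_euclNorm {k : ℕ} (v : Fin k → ℝ) (i : Fin k) : |v i| ≤ euclNorm v :=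
  PiLp.norm_apply_le (WithLp.toLp 2 v) i

lemma continuous_euclNorm {k : ℕ} : Continuous (euclNorm (k := k)) :=
  continuous_norm.comp (PiLp.continuous_toLp 2 _)

section Lyapunov

variable {n m : ℕ} (γc γe : ℝ) (B : Matrix (Fin n) (Fin m) ℝ)
  (xpLo xpHi : Fin n → ℝ) (xeLo xeHi : Fin m → ℝ)

def negChi (p : (Fin n → ℝ) × (Fin m → ℝ) × (Fin n → ℝ)) : Fin m → ℝ :=
  -(γe • p.2.1 + γc • (Bᵀ *ᵥ p.1))

noncomputable def lyapunovA5 (p : (Fin n → ℝ) × (Fin m → ℝ) × (Fin n → ℝ)) : ℝ :=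
  1 / 2 * euclNorm p.1 ^ 2 + ∑ i, satIntegral (p.2.2 i) (xpLo i) (xpHi i) +
    1 / γe ^ 2 * ∑ i, satIntegral (negChi γc γe B p i) (xeLo i) (xeHi i)

variable {xpLo xpHi xeLo xeHi}

lemma continuous_negChi : Continuous (negChi (n := n) γc γe B) := by
  unfold negChi
  fun_prop

lemma lyapunovA5_zero : lyapunovA5 γc γe B xpLo xpHi xeLo xeHi 0 = 0 := by
  simp [lyapunovA5, negChi, euclNorm, satIntegral]

lemma lyapunovA5_nonneg (hp : ∀ i, xpLo i ≤ 0 ∧ 0 ≤ xpHi i) (he : ∀ i, xeLo i ≤ 0 ∧ 0 ≤ xeHi i)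
    (p : (Fin n → ℝ) × (Fin m → ℝ) × (Fin n → ℝ)) :
    0 ≤ lyapunovA5 γc γe B xpLo xpHi xeLo xeHi p := by
  unfold lyapunovA5
  have hsp := Finset.sum_nonneg fun i (_ : i ∈ Finset.univ) =>
    satIntegral_nonneg (hp i).1 (hp i).2 (p.2.2 i)
  have hse := Finset.sum_nonneg fun i (_ : i ∈ Finset.univ) =>
    satIntegral_nonneg (he i).1 (he i).2 (negChi γc γe B p i)
  positivity

lemma continuous_lyapunovA5 (hp : ∀ i, xpLo i ≤ xpHi i) (he : ∀ i, xeLo i ≤ xeHi i) :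
    Continuous (lyapunovA5 γc γe B xpLo xpHi xeLo xeHi) := by
  unfold lyapunovA5
  have hχ := continuous_negChi γc γe B
  have hnorm := continuous_euclNorm (k := n)
  refine .add (.add (by fun_prop) (continuous_finsetSum _ fun i _ => ?_))
    (continuous_const.mul (continuous_finsetSum _ fun i _ => ?_))
  · exact (continuous_satIntegral (hp i)).comp (by fun_prop)
  · exact (continuous_satIntegral (he i)).comp (by fun_prop)

lemma bounds_of_lyapunovA5_le (hγe : γe ≠ 0) (hp : ∀ i, xpLo i < 0 ∧ 0 < xpHi i)
    (he : ∀ i, xeLo i < 0 ∧ 0 < xeHi i) {p : (Fin n → ℝ) × (Fin m → ℝ) × (Fin n → ℝ)} {D : ℝ}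
    (h : lyapunovA5 γc γe B xpLo xpHi xeLo xeHi p ≤ D) :
    (∀ i, p.1 i ∈ Set.Icc (-√(2 * D)) √(2 * D)) ∧
    (∀ i, negChi γc γe B p i ∈
      Set.Icc (xeLo i + γe ^ 2 * D / xeLo i) (xeHi i + γe ^ 2 * D / xeHi i)) ∧
    (∀ i, p.2.2 i ∈ Set.Icc (xpLo i + D / xpLo i) (xpHi i + D / xpHi i)) := by
  have hsp : ∀ i, 0 ≤ satIntegral (p.2.2 i) (xpLo i) (xpHi i) := fun i =>
    satIntegral_nonneg (hp i).1.le (hp i).2.le _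
  have hse : ∀ i, 0 ≤ satIntegral (negChi γc γe B p i) (xeLo i) (xeHi i) := fun i =>
    satIntegral_nonneg (he i).1.le (he i).2.le _
  have hSp := Finset.sum_nonneg fun i (_ : i ∈ Finset.univ) => hsp i
  have hSe := Finset.sum_nonneg fun i (_ : i ∈ Finset.univ) => hse i
  have hγe2 : 0 < γe ^ 2 := by positivity
  have hlast : 0 ≤ 1 / γe ^ 2 * ∑ j, satIntegral (negChi γc γe B p j) (xeLo j) (xeHi j) := by
    positivity
  have hfirst : 0 ≤ 1 / 2 * euclNorm p.1 ^ 2 := by positivity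
  unfold lyapunovA5 at h
  refine ⟨fun i => ?_, fun i => ?_, fun i => ?_⟩
  · have hnorm : euclNorm p.1 ^ 2 ≤ 2 * D := by linarith
    have h0 : 0 ≤ euclNorm p.1 := norm_nonneg _
    exact abs_le.mp ((abs_apply_le_euclNorm p.1 i).trans
      (abs_of_nonneg h0 ▸ Real.abs_le_sqrt hnorm))
  · refine mem_Icc_of_satIntegral_le (he i).1 (he i).2 ?_
    have hsum : ∑ j, satIntegral (negChi γc γe B p j) (xeLo j) (xeHi j) ≤ γe ^ 2 * D := by
      rw [← div_le_iff₀' hγe2, ← one_div_mul_eq_div]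
      linarith
    exact (Finset.single_le_sum (fun j _ => hse j) (Finset.mem_univ i)).trans hsum
  · refine mem_Icc_of_satIntegral_le (hp i).1 (hp i).2 ?_
    linarith [Finset.single_le_sum (fun j _ => hsp j) (Finset.mem_univ i)]

lemma isCompact_lyapunovA5_sublevel (hγe : γe ≠ 0) (hp : ∀ i, xpLo i < 0 ∧ 0 < xpHi i)
    (he : ∀ i, xeLo i < 0 ∧ 0 < xeHi i) (D : ℝ) :
    IsCompact {p | lyapunovA5 γc γe B xpLo xpHi xeLo xeHi p ≤ D} := by
  have hbox : IsCompact ((Set.univ.pi fun _ : Fin n => Set.Icc (-√(2 * D)) √(2 * D)) ×ˢ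
      (Set.univ.pi fun i =>
        Set.Icc (xeLo i + γe ^ 2 * D / xeLo i) (xeHi i + γe ^ 2 * D / xeHi i)) ×ˢ
      (Set.univ.pi fun i => Set.Icc (xpLo i + D / xpLo i) (xpHi i + D / xpHi i))) :=
    (isCompact_univ_pi fun _ => isCompact_Icc).prod
      ((isCompact_univ_pi fun _ => isCompact_Icc).prod (isCompact_univ_pi fun _ => isCompact_Icc))
  -- `x̃ₑ` is recovered continuously from `x̃` and `χ` because `γe ≠ 0`.
  let recover (q : (Fin n → ℝ) × (Fin m → ℝ) × (Fin n → ℝ)) :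
      (Fin n → ℝ) × (Fin m → ℝ) × (Fin n → ℝ) :=
    (q.1, -γe⁻¹ • (q.2.1 + γc • (Bᵀ *ᵥ q.1)), q.2.2)
  have hrecover : ∀ p, recover (p.1, negChi γc γe B p, p.2.2) = p := by
    rintro ⟨x, xe, xp⟩
    simp [recover, negChi, smul_smul, hγe]
  refine (hbox.image (f := recover) (by fun_prop)).of_isClosed_subset
    (isClosed_le (continuous_lyapunovA5 γc γe B (fun i => (hp i).1.le.trans (hp i).2.le)
      (fun i => (he i).1.le.trans (he i).2.le)) continuous_const) fun p hpD => ?_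
  obtain ⟨hx, hχ, hxp⟩ := bounds_of_lyapunovA5_le γc γe B hγe hp he hpD
  exact ⟨(p.1, negChi γc γe B p, p.2.2),
    ⟨fun i _ => hx i, fun i _ => hχ i, fun i _ => hxp i⟩, hrecover p⟩

end Lyapunov

/-- Lemma A.5: the Lyapunov function of the constrained closed loop is
nonnegative, vanishes at the origin, and has nonempty compact sublevel sets. -/
theorem lemmaA5_compact_sublevel_sets {n m : ℕ}
    (γc γe : ℝ) (hγe : 0 < γe)
    (B : Matrix (Fin n) (Fin m) ℝ)
    (xpLo xpHi : Fin n → ℝ) (xeLo xeHi : Fin m → ℝ)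
    (hp : ∀ i, xpLo i < 0 ∧ 0 < xpHi i)
    (he : ∀ i, xeLo i < 0 ∧ 0 < xeHi i)
    (V : (Fin n → ℝ) → (Fin m → ℝ) → (Fin n → ℝ) → ℝ)
    (hV : ∀ (xt : Fin n → ℝ) (xte : Fin m → ℝ) (xtp : Fin n → ℝ),
      V xt xte xtp =
        (1 / 2) * euclNorm xt ^ 2 +
        (∑ i, ∫ y in (0:ℝ)..(xtp i), sat1 y (xpLo i) (xpHi i)) +
        (1 / γe ^ 2) *
          ∑ i, ∫ y in (0:ℝ)..(-((γe • xte + γc • (Bᵀ *ᵥ xt)) i)),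
            sat1 y (xeLo i) (xeHi i)) :
    (∀ xt xte xtp, 0 ≤ V xt xte xtp) ∧
    V 0 0 0 = 0 ∧
    ∀ D : ℝ, 0 ≤ D →
      ({p : (Fin n → ℝ) × (Fin m → ℝ) × (Fin n → ℝ) |
        V p.1 p.2.1 p.2.2 ≤ D}).Nonempty ∧
      IsCompact {p : (Fin n → ℝ) × (Fin m → ℝ) × (Fin n → ℝ) |
        V p.1 p.2.1 p.2.2 ≤ D} := by
  obtain rfl : V = fun xt xte xtp => lyapunovA5 γc γe B xpLo xpHi xeLo xeHi (xt, xte, xtp) :=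
    funext fun xt => funext fun xte => funext fun xtp => hV xt xte xtp
  have hzero : lyapunovA5 γc γe B xpLo xpHi xeLo xeHi 0 = 0 := lyapunovA5_zero γc γe B
  refine ⟨fun xt xte xtp => lyapunovA5_nonneg γc γe B (fun i => ⟨(hp i).1.le, (hp i).2.le⟩)
    (fun i => ⟨(he i).1.le, (he i).2.le⟩) _, hzero, fun D hD => ⟨?_, ?_⟩⟩
  · exact ⟨0, hzero.trans_le hD⟩
  · exact isCompact_lyapunovA5_sublevel γc γe B hγe.ne' hp he D
end
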